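/- Let ρ and σ be d×d density matrices with σ positive definite. Then the relative entropy is bounded by the max-relative entropy: Tr[ρ · log₂ρ] − Tr[ρ · log₂σ] ≤ log₂ inf{λ ∈ ℝ | λ·σ − ρ is positive semidefinite}. -/

import Mathlib

open Matrix Kronecker
open scoped ComplexOrder Classical

/-- Positive semidefinite square root of a matrix (zero if not PSD). -/
noncomputable def matSqrt {n : Type*} [Fintype n] [DecidableEq n] (A : Matrix n n ℂ) :
    Matrix n n ℂ :=
  if h : A.PosSemidef then
    (h.1.eigenvectorUnitary : Matrix n n ℂ) *
      Matrix.diagonal (fun i => ((Real.sqrt (h.1.eigenvalues i) : ℝ) : ℂ)) *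
      (star h.1.eigenvectorUnitary : Matrix n n ℂ)
  else 0

/-- Fidelity `F(ρ,σ) = (Tr √(√ρ σ √ρ))²`. -/
noncomputable def fidelity {n : Type*} [Fintype n] [DecidableEq n] (ρ σ : Matrix n n ℂ) : ℝ :=
  ((matSqrt (matSqrt ρ * σ * matSqrt ρ)).trace).re ^ 2

/-- A density matrix: positive semidefinite with trace 1. -/
def IsDensityMatrix {n : Type*} [Fintype n] [DecidableEq n] (ρ : Matrix n n ℂ) : Prop :=
  ρ.PosSemidef ∧ ρ.trace = 1

/-- Incoherent (diagonal) matrix in the computational basis. -/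
def IsIncoherent {n : Type*} [Fintype n] [DecidableEq n] (δ : Matrix n n ℂ) : Prop :=
  ∀ i j, i ≠ j → δ i j = 0

/-- Min-relative entropy `D_min(ρ‖σ) = -log₂ F(ρ,σ)`. -/
noncomputable def Dmin {n : Type*} [Fintype n] [DecidableEq n] (ρ σ : Matrix n n ℂ) : ℝ :=
  - Real.logb 2 (fidelity ρ σ)

/-- Max-relative entropy `D_max(ρ‖σ) = log₂ inf {λ | λσ - ρ ⪰ 0}`. -/
noncomputable def Dmax {n : Type*} [Fintype n] [DecidableEq n] (ρ σ : Matrix n n ℂ) : ℝ :=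
  Real.logb 2 (sInf {l : ℝ | (l • σ - ρ).PosSemidef})

/-- Min-entropy of coherence: infimum of `D_min(ρ‖δ)` over incoherent density matrices `δ`. -/
noncomputable def Cmin {n : Type*} [Fintype n] [DecidableEq n] (ρ : Matrix n n ℂ) : ℝ :=
  sInf {x | ∃ δ, IsDensityMatrix δ ∧ IsIncoherent δ ∧ x = Dmin ρ δ}

/-- Max-entropy of coherence: infimum of `D_max(ρ‖δ)` over incoherent density matrices `δ`. -/
noncomputable def Cmax {n : Type*} [Fintype n] [DecidableEq n] (ρ : Matrix n n ℂ) : ℝ :=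
  sInf {x | ∃ δ, IsDensityMatrix δ ∧ IsIncoherent δ ∧ x = Dmax ρ δ}

/-- Geometric coherence: infimum of `1 - F(ρ,δ)` over incoherent density matrices `δ`. -/
noncomputable def Cg {n : Type*} [Fintype n] [DecidableEq n] (ρ : Matrix n n ℂ) : ℝ :=
  sInf {x | ∃ δ, IsDensityMatrix δ ∧ IsIncoherent δ ∧ x = 1 - fidelity ρ δ}

/-- `Tr[ρ log₂ ρ] = Σ λᵢ log₂ λᵢ` over the eigenvalues of a Hermitian `ρ`
(with `0·log₂ 0 = 0`, since `Real.logb 2 0 = 0`). -/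
noncomputable def trLog2Self {n : Type*} [Fintype n] [DecidableEq n] (ρ : Matrix n n ℂ) : ℝ :=
  if h : ρ.IsHermitian then ∑ i, h.eigenvalues i * Real.logb 2 (h.eigenvalues i) else 0

/-- Von Neumann entropy `S(ρ) = -Σ λᵢ log₂ λᵢ`. -/
noncomputable def vN {n : Type*} [Fintype n] [DecidableEq n] (ρ : Matrix n n ℂ) : ℝ :=
  - trLog2Self ρ

/-- `log₂ σ` via the spectral functional calculus. -/
noncomputable def matLog2 {n : Type*} [Fintype n] [DecidableEq n] (σ : Matrix n n ℂ) :
    Matrix n n ℂ :=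
  if h : σ.IsHermitian then
    (h.eigenvectorUnitary : Matrix n n ℂ) *
      Matrix.diagonal (fun i => (Real.logb 2 (h.eigenvalues i) : ℂ)) *
      (h.eigenvectorUnitary : Matrix n n ℂ)ᴴ
  else 0

/-- Base-2 Shannon entropy of the distribution `i ↦ |ψ(i)|²`,
which equals `S(Δ(|ψ⟩⟨ψ|))` for a unit vector `ψ`. -/
noncomputable def shannonOfVec {n : Type*} [Fintype n] (ψ : n → ℂ) : ℝ :=
  - ∑ i, ‖ψ i‖ ^ 2 * Real.logb 2 (‖ψ i‖ ^ 2)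

/-- Coherence of formation: infimum of the average dephased pure-state entropy
over all finite pure-state ensembles for `ρ`. -/
noncomputable def Cf {d : ℕ} (ρ : Matrix (Fin d) (Fin d) ℂ) : ℝ :=
  sInf {x | ∃ m : ℕ, ∃ p : Fin m → ℝ, ∃ ψ : Fin m → Fin d → ℂ,
    (∀ j, 0 ≤ p j) ∧ (∑ j, p j) = 1 ∧ (∀ j, (∑ i, ‖ψ j i‖ ^ 2) = 1) ∧
    (∑ j, (p j : ℂ) • Matrix.vecMulVec (ψ j) (fun i => starRingEnd ℂ (ψ j i))) = ρ ∧
    x = ∑ j, p j * shannonOfVec (ψ j)}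

/-- The coherence monotone `C₀`: infimum over pure-state ensembles of
`max_j log₂ T_j`, where `T_j` is the number of nonzero coordinates of `ψ_j`. -/
noncomputable def C0 {d : ℕ} (ρ : Matrix (Fin d) (Fin d) ℂ) : ℝ :=
  sInf {x | ∃ m : ℕ, ∃ p : Fin m → ℝ, ∃ ψ : Fin m → Fin d → ℂ,
    (∀ j, 0 < p j) ∧ (∑ j, p j) = 1 ∧ (∀ j, (∑ i, ‖ψ j i‖ ^ 2) = 1) ∧
    (∑ j, (p j : ℂ) • Matrix.vecMulVec (ψ j) (fun i => starRingEnd ℂ (ψ j i))) = ρ ∧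
    x = ⨆ j, Real.logb 2 ((Finset.univ.filter fun i => ψ j i ≠ 0).card)}

/-- `ψ : ℂ^{d_A} ⊗ ℂ^{d_E}` is a purification of `ρ`. -/
def IsPurification {dA dE : ℕ} (ρ : Matrix (Fin dA) (Fin dA) ℂ)
    (ψ : Fin dA × Fin dE → ℂ) : Prop :=
  (∑ x, ‖ψ x‖ ^ 2) = 1 ∧ ∀ i j, (∑ k, ψ (i, k) * starRingEnd ℂ (ψ (j, k))) = ρ i j

/-- The state `ρ_{X_A E}` obtained from `|ψ⟩⟨ψ|` by dephasing system `A`. -/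
noncomputable def dephasedPur {dA dE : ℕ} (ψ : Fin dA × Fin dE → ℂ) :
    Matrix (Fin dA × Fin dE) (Fin dA × Fin dE) ℂ :=
  fun x y => if x.1 = y.1 then ψ x * starRingEnd ℂ (ψ y) else 0

/-- Conditional min-entropy
`H_min(A|E) = -log₂ inf {Tr σ | σ ⪰ 0, I_A ⊗ σ - ρ_{AE} ⪰ 0}`. -/
noncomputable def HminCond {dA dE : ℕ}
    (ρAE : Matrix (Fin dA × Fin dE) (Fin dA × Fin dE) ℂ) : ℝ :=
  - Real.logb 2 (sInf {x | ∃ σ : Matrix (Fin dE) (Fin dE) ℂ, σ.PosSemidef ∧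
      ((1 : Matrix (Fin dA) (Fin dA) ℂ) ⊗ₖ σ - ρAE).PosSemidef ∧ x = σ.trace.re})

/-- Conditional max-entropy
`H_max(A|E) = log₂ sup {F(I_A ⊗ σ, ρ_{AE}) | σ a density matrix}`. -/
noncomputable def HmaxCond {dA dE : ℕ}
    (ρAE : Matrix (Fin dA × Fin dE) (Fin dA × Fin dE) ℂ) : ℝ :=
  Real.logb 2 (sSup {x | ∃ σ : Matrix (Fin dE) (Fin dE) ℂ, IsDensityMatrix σ ∧
      x = fidelity ((1 : Matrix (Fin dA) (Fin dA) ℂ) ⊗ₖ σ) ρAE})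

/-!
Diagonalise `ρ = ∑ pᵢ |uᵢ⟩⟨uᵢ|` and `σ = ∑ qⱼ |vⱼ⟩⟨vⱼ|` and put `Mᵢⱼ = |⟨uᵢ, vⱼ⟩|²`, a matrix with
unit row sums. Then `S(ρ‖σ) = ∑ pᵢ Mᵢⱼ log₂ (pᵢ / qⱼ)` and `Tr ρσ⁻¹ρ = ∑ pᵢ Mᵢⱼ (pᵢ / qⱼ)`, so
concavity of the logarithm gives `S(ρ‖σ) ≤ log₂ Tr ρσ⁻¹ρ`. On the other hand `ρ ≤ λσ` implies
`ρσ⁻¹ρ ≤ λρ`: conjugating by `σ^{-1/2}` turns the hypothesis into `0 ≤ N ≤ λ` for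
`N = σ^{-1/2} ρ σ^{-1/2}`, whence `N² ≤ λN`. Taking traces, `Tr ρσ⁻¹ρ ≤ λ` for every feasible `λ`,
hence also for their infimum.
-/

open scoped MatrixOrder

namespace Matrix

variable {n 𝕜 : Type*} [Fintype n] [DecidableEq n] [RCLike 𝕜]

theorem trace_diagonal_mul_mul_diagonal_mul_star (d e : n → 𝕜) (W : Matrix n n 𝕜) :
    (diagonal d * W * diagonal e * star W).trace = ∑ i, ∑ j, d i * e j * (‖W i j‖ : 𝕜) ^ 2 := by
  refine Finset.sum_congr rfl fun i _ => ?_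
  rw [diag_apply, mul_apply]
  refine Finset.sum_congr rfl fun j _ => ?_
  rw [mul_diagonal, diagonal_mul, star_apply, RCLike.star_def, ← RCLike.mul_conj]
  ring

theorem IsHermitian.exists_unitary_trace_cfc_mul_cfc {A B : Matrix n n 𝕜} (hA : A.IsHermitian)
    (hB : B.IsHermitian) : ∃ W ∈ unitary (Matrix n n 𝕜), ∀ f g : ℝ → ℝ,
      (cfc f A * cfc g B).trace =
        ((∑ i, ∑ j, f (hA.eigenvalues i) * g (hB.eigenvalues j) * ‖W i j‖ ^ 2 : ℝ) : 𝕜) := by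
  set U : Matrix n n 𝕜 := ↑hA.eigenvectorUnitary
  set V : Matrix n n 𝕜 := ↑hB.eigenvectorUnitary
  refine ⟨star U * V, mul_mem (Unitary.star_mem hA.eigenvectorUnitary.2)
    hB.eigenvectorUnitary.2, fun f g => ?_⟩
  rw [hA.cfc_eq, hB.cfc_eq, IsHermitian.cfc, IsHermitian.cfc, Unitary.conjStarAlgAut_apply,
    Unitary.conjStarAlgAut_apply]
  set D : Matrix n n 𝕜 := diagonal (RCLike.ofReal ∘ f ∘ hA.eigenvalues)
  set E : Matrix n n 𝕜 := diagonal (RCLike.ofReal ∘ g ∘ hB.eigenvalues)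
  calc (U * D * star U * (V * E * star V)).trace
      = (D * (star U * V) * E * star (star U * V)).trace := by
        simp only [star_mul, star_star, Matrix.mul_assoc]
        rw [trace_mul_comm U]
        simp only [Matrix.mul_assoc]
    _ = _ := by
        rw [trace_diagonal_mul_mul_diagonal_mul_star]
        push_cast
        rfl

theorem sum_norm_sq_apply_eq_one_of_mem_unitary {W : Matrix n n 𝕜}
    (hW : W ∈ unitary (Matrix n n 𝕜)) (i : n) : ∑ j, ‖W i j‖ ^ 2 = 1 := by
  have h := congrArg (· i i) (Unitary.mul_star_self_of_mem hW)
  simp only [mul_apply, one_apply_eq] at h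
  exact_mod_cast (by simpa [RCLike.mul_conj] using h : ∑ j, (‖_‖ : 𝕜) ^ 2 = 1)

theorem IsHermitian.exists_le_smul_of_posDef {A B : Matrix n n 𝕜} (hA : A.IsHermitian)
    (hB : B.PosDef) : ∃ c : ℝ, A ≤ c • B := by
  set m := ∑ i, |hA.eigenvalues i|
  set r := ∑ j, (hB.isHermitian.eigenvalues j)⁻¹
  have hAm : A ≤ algebraMap ℝ _ m := by
    rw [le_algebraMap_iff_spectrum_le hA.isSelfAdjoint, hA.spectrum_real_eq_range_eigenvalues]
    rintro _ ⟨i, rfl⟩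
    exact (le_abs_self _).trans (Finset.single_le_sum (f := fun i => |hA.eigenvalues i|)
      (fun j _ => abs_nonneg _) (Finset.mem_univ i))
  have hmB : algebraMap ℝ _ m ≤ (m * r) • B := by
    have : 0 ≤ cfc (fun x => m * r * x - m) B := by
      refine cfc_nonneg fun x hx => ?_
      rw [hB.isHermitian.spectrum_real_eq_range_eigenvalues] at hx
      obtain ⟨j, rfl⟩ := hx
      have hq := hB.eigenvalues_pos j
      have hrq : 1 ≤ r * hB.isHermitian.eigenvalues j := by
        calc 1 = (hB.isHermitian.eigenvalues j)⁻¹ * hB.isHermitian.eigenvalues j :=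
              (inv_mul_cancel₀ hq.ne').symm
          _ ≤ r * hB.isHermitian.eigenvalues j := mul_le_mul_of_nonneg_right
              (Finset.single_le_sum (fun k _ => (inv_pos.2 (hB.eigenvalues_pos k)).le)
                (Finset.mem_univ j)) hq.le
      have hm : 0 ≤ m := Finset.sum_nonneg fun i _ => abs_nonneg _
      linarith [mul_nonneg hm (sub_nonneg.2 hrq)]
    rwa [cfc_sub (fun x => m * r * x) (fun _ => m) B, cfc_const_mul (m * r) (fun x => x) B,
      cfc_id' ℝ B, cfc_const m B, sub_nonneg] at this
  exact ⟨m * r, hAm.trans hmB⟩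

theorem IsHermitian.inv_eq_cfc_inv {B : Matrix n n 𝕜} (hB : B.IsHermitian) (hBu : IsUnit B) :
    B⁻¹ = cfc (fun x : ℝ => x⁻¹) B := by
  obtain ⟨u, rfl⟩ := hBu
  rw [← coe_units_inv, cfc_inv_id u hB.isSelfAdjoint]

theorem mul_self_le_smul_of_le_smul_one {N : Matrix n n 𝕜} {c : ℝ} (hN : 0 ≤ N)
    (hNc : N ≤ c • 1) : N * N ≤ c • N := by
  set R := CFC.sqrt N
  have hRR : R * R = N := CFC.sqrt_mul_sqrt_self N hN
  calc N * N = R * N * R := by rw [← hRR]; simp only [Matrix.mul_assoc]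
    _ ≤ R * (c • 1) * R := conjugate_le_conjugate_of_nonneg hNc (CFC.sqrt_nonneg N)
    _ = c • N := by rw [Matrix.mul_smul, Matrix.mul_one, Matrix.smul_mul, hRR]

theorem mul_inv_mul_le_smul {A B : Matrix n n 𝕜} {c : ℝ} (hA : 0 ≤ A) (hB : B.PosDef)
    (hAB : A ≤ c • B) : A * B⁻¹ * A ≤ c • A := by
  set T := CFC.sqrt B
  have hTT : T * T = B := CFC.sqrt_mul_sqrt_self B hB.posSemidef.nonneg
  have hT : IsUnit T.det := by
    have hBu : IsUnit (T * T) := hTT ▸ hB.isUnit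
    exact (isUnit_iff_isUnit_det T).1 (isUnit_of_mul_isUnit_left hBu)
  have hTinv : 0 ≤ T⁻¹ := (CFC.sqrt_nonneg B).posSemidef.inv.nonneg
  set N := T⁻¹ * A * T⁻¹
  have hTNT : T * N * T = A := by
    simp only [N, ← Matrix.mul_assoc, mul_nonsing_inv T hT, Matrix.one_mul]
    rw [Matrix.mul_assoc, nonsing_inv_mul T hT, Matrix.mul_one]
  have hNc : N ≤ c • 1 := by
    calc N ≤ T⁻¹ * (c • B) * T⁻¹ := conjugate_le_conjugate_of_nonneg hAB hTinv
      _ = c • 1 := by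
        rw [← hTT, Matrix.mul_smul, Matrix.smul_mul, ← Matrix.mul_assoc, nonsing_inv_mul T hT,
          Matrix.one_mul, mul_nonsing_inv T hT]
  have hBinv : B⁻¹ = T⁻¹ * T⁻¹ := by rw [← hTT, Matrix.mul_inv_rev]
  calc A * B⁻¹ * A = T * (N * N) * T := by
        rw [hBinv, ← hTNT]
        simp only [Matrix.mul_assoc]
        rw [← Matrix.mul_assoc T T⁻¹, mul_nonsing_inv T hT, Matrix.one_mul,
          ← Matrix.mul_assoc T⁻¹ T, nonsing_inv_mul T hT, Matrix.one_mul]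
    _ ≤ T * (c • N) * T := conjugate_le_conjugate_of_nonneg
        (mul_self_le_smul_of_le_smul_one (conjugate_nonneg_of_nonneg hA hTinv) hNc)
        (CFC.sqrt_nonneg B)
    _ = c • A := by rw [Matrix.mul_smul, Matrix.smul_mul, hTNT]

end Matrix

open Real

theorem mul_logb_sub_logb_le {b x y : ℝ} (hb : 1 < b) (hx : 0 ≤ x) (hy : 0 < y) :
    x * (logb b x - logb b y) ≤ (x ^ 2 / y - x) / log b := by
  rcases hx.eq_or_lt with rfl | hx
  · simp
  rw [← logb_div hx.ne' hy.ne', logb, ← mul_div_assoc, div_le_div_iff_of_pos_right (log_pos hb)]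
  calc x * log (x / y) ≤ x * (x / y - 1) :=
        mul_le_mul_of_nonneg_left (log_le_sub_one_of_pos (div_pos hx hy)) hx.le
    _ = x ^ 2 / y - x := by ring

theorem sum_mul_logb_sub_le_logb {ι κ : Type*} [Fintype ι] [Fintype κ] {b c : ℝ}
    {p : ι → ℝ} {q : κ → ℝ} {M : ι → κ → ℝ} (hb : 1 < b) (hc : 0 < c) (hp : ∀ i, 0 ≤ p i)
    (hp1 : ∑ i, p i = 1) (hq : ∀ j, 0 < q j) (hM : ∀ i j, 0 ≤ M i j)
    (hM1 : ∀ i, ∑ j, M i j = 1) (hpqc : ∑ i, ∑ j, p i ^ 2 * (q j)⁻¹ * M i j ≤ c) :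
    ∑ i, p i * logb b (p i) - ∑ i, ∑ j, p i * logb b (q j) * M i j ≤ logb b c := by
  have key : ∀ i j, M i j * (p i * (logb b (p i) - logb b (q j) - logb b c)) ≤
      M i j * ((p i ^ 2 / (q j * c) - p i) / log b) := fun i j => by
    rw [sub_sub, ← logb_mul (hq j).ne' hc.ne']
    exact mul_le_mul_of_nonneg_left (mul_logb_sub_logb_le hb (hp i) (mul_pos (hq j) hc)) (hM i j)
  have hlhs : ∑ i, ∑ j, M i j * (p i * (logb b (p i) - logb b (q j) - logb b c)) =
      ∑ i, p i * logb b (p i) - ∑ i, ∑ j, p i * logb b (q j) * M i j - logb b c := by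
    have hrow : ∀ i, ∑ j, M i j * (p i * (logb b (p i) - logb b (q j) - logb b c)) =
        p i * logb b (p i) - ∑ j, p i * logb b (q j) * M i j - logb b c * p i := fun i => by
      calc _ = ∑ j, ((p i * logb b (p i) - logb b c * p i) * M i j
            - p i * logb b (q j) * M i j) := Finset.sum_congr rfl fun j _ => by ring
        _ = _ := by rw [Finset.sum_sub_distrib, ← Finset.mul_sum, hM1, mul_one]; ring
    rw [Finset.sum_congr rfl fun i _ => hrow i, Finset.sum_sub_distrib, Finset.sum_sub_distrib,
      ← Finset.mul_sum, hp1, mul_one]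
  have hrhs : ∑ i, ∑ j, M i j * ((p i ^ 2 / (q j * c) - p i) / log b) =
      ((∑ i, ∑ j, p i ^ 2 * (q j)⁻¹ * M i j) / c - 1) / log b := by
    have hrow : ∀ i, ∑ j, M i j * ((p i ^ 2 / (q j * c) - p i) / log b) =
        ((∑ j, p i ^ 2 * (q j)⁻¹ * M i j) / c - p i) / log b := fun i => by
      calc _ = ∑ j, ((p i ^ 2 * (q j)⁻¹ * M i j) / c / log b - p i / log b * M i j) :=
            Finset.sum_congr rfl fun j _ => by ring
        _ = _ := by
          rw [Finset.sum_sub_distrib, ← Finset.mul_sum, hM1, ← Finset.sum_div, ← Finset.sum_div]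
          ring
    rw [Finset.sum_congr rfl fun i _ => hrow i, ← Finset.sum_div, Finset.sum_sub_distrib,
      ← Finset.sum_div, hp1]
  have hneg : ((∑ i, ∑ j, p i ^ 2 * (q j)⁻¹ * M i j) / c - 1) / log b ≤ 0 :=
    div_nonpos_of_nonpos_of_nonneg (by rw [sub_nonpos, div_le_one hc]; exact hpqc) (log_pos hb).le
  linarith [Finset.sum_le_sum fun i (_ : i ∈ Finset.univ) =>
    Finset.sum_le_sum fun j (_ : j ∈ Finset.univ) => key i j]

section DensityMatrix

variable {n : Type*} [Fintype n] [DecidableEq n] {ρ σ : Matrix n n ℂ}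

theorem matLog2_eq_cfc (hσ : σ.IsHermitian) : matLog2 σ = cfc (logb 2) σ := by
  rw [matLog2, dif_pos hσ, hσ.cfc_eq, IsHermitian.cfc, Unitary.conjStarAlgAut_apply]
  rfl

theorem IsDensityMatrix.one_le_of_le_smul (hρ : IsDensityMatrix ρ) (hσ : IsDensityMatrix σ)
    {c : ℝ} (h : ρ ≤ c • σ) : 1 ≤ c := by
  have := (Matrix.le_iff.1 h).trace_nonneg
  rw [trace_sub, trace_smul, hρ.2, hσ.2, Complex.real_smul, mul_one, ← Complex.ofReal_one,
    ← Complex.ofReal_sub, Complex.zero_le_real] at this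
  linarith

theorem IsDensityMatrix.re_trace_mul_inv_mul_le (hρ : IsDensityMatrix ρ) (hσ : σ.PosDef)
    {c : ℝ} (h : ρ ≤ c • σ) : (ρ * σ⁻¹ * ρ).trace.re ≤ c := by
  have := (Matrix.le_iff.1 (mul_inv_mul_le_smul hρ.1.nonneg hσ h)).trace_nonneg
  rw [trace_sub, trace_smul, hρ.2] at this
  simpa using (Complex.le_def.1 this).1

theorem IsDensityMatrix.trLog2Self_sub_le_logb (hρ : IsDensityMatrix ρ) (hσ : σ.PosDef) {c : ℝ}
    (hc : 0 < c) (h : (ρ * σ⁻¹ * ρ).trace.re ≤ c) :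
    trLog2Self ρ - (ρ * matLog2 σ).trace.re ≤ logb 2 c := by
  have hρh := hρ.1.isHermitian
  have hσh := hσ.isHermitian
  obtain ⟨W, hW, htrace⟩ := hρh.exists_unitary_trace_cfc_mul_cfc hσh
  have hlog : (ρ * matLog2 σ).trace.re = ∑ i, ∑ j,
      hρh.eigenvalues i * logb 2 (hσh.eigenvalues j) * ‖W i j‖ ^ 2 := by
    conv_lhs => rw [← cfc_id' ℝ ρ]
    rw [matLog2_eq_cfc hσh, htrace]
    exact Complex.ofReal_re _
  have hinv : (ρ * σ⁻¹ * ρ).trace.re = ∑ i, ∑ j,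
      hρh.eigenvalues i ^ 2 * (hσh.eigenvalues j)⁻¹ * ‖W i j‖ ^ 2 := by
    rw [trace_mul_comm, ← Matrix.mul_assoc, ← sq, ← cfc_pow_id (R := ℝ) ρ 2,
      hσh.inv_eq_cfc_inv hσ.isUnit, htrace]
    exact Complex.ofReal_re _
  have hp1 : ∑ i, hρh.eigenvalues i = 1 := by
    have := hρh.trace_eq_sum_eigenvalues
    rw [hρ.2, ← RCLike.ofReal_sum, ← RCLike.ofReal_one, RCLike.ofReal_inj] at this
    exact this.symm
  rw [trLog2Self, dif_pos hρh, hlog]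
  exact sum_mul_logb_sub_le_logb one_lt_two hc hρ.1.eigenvalues_nonneg hp1 hσ.eigenvalues_pos
    (fun _ _ => sq_nonneg _) (sum_norm_sq_apply_eq_one_of_mem_unitary hW) (hinv ▸ h)

end DensityMatrix

/-- `S(ρ‖σ) ≤ D_max(ρ‖σ)` for density matrices with `σ` positive definite. -/
theorem stmt5 {d : ℕ} (ρ σ : Matrix (Fin d) (Fin d) ℂ) (hρ : IsDensityMatrix ρ)
    (hσ : IsDensityMatrix σ) (hσpd : σ.PosDef) :
    trLog2Self ρ - ((ρ * matLog2 σ).trace).re ≤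
      Real.logb 2 (sInf {l : ℝ | (l • σ - ρ).PosSemidef}) := by
  set S := {l : ℝ | (l • σ - ρ).PosSemidef}
  have hS : S.Nonempty := hρ.1.isHermitian.exists_le_smul_of_posDef hσpd
  have hS1 : 1 ≤ sInf S := le_csInf hS fun c hc => hρ.one_le_of_le_smul hσ hc
  exact hρ.trLog2Self_sub_le_logb hσpd (by linarith)
    (le_csInf hS fun c hc => hρ.re_trace_mul_inv_mul_le hσpd hc)
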